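/- arXiv:2203.16992 — 7 statements merged into one kernel-verified Lean document; each statement's English description precedes it below -/
import Mathlib

section
/- Let G be a directed acyclic graph with a topological order π, and suppose an edge (u,v) with π(u) > π(v) is inserted such that the resulting graph G' = G + (u,v) is still acyclic. Let W = {w : π(v) ≤ π(w) ≤ π(u)}, let T ⊆ W be the vertices of W reachable from v in G (including v), and let S ⊆ W be the vertices of W that can reach u in G (including u). Then in G': (1) no vertex of T can reach any vertex of S, (2) no vertex of T can reach any vertex of Z := W \ (S ∪ T), and (3) no vertex of Z can reach any vertex of S. -/
/-!
Since `G'` is acyclic and contains the edge `u → v`, the vertex `v` cannot reach `u` in `G'`.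
A `G'`-path either avoids the new edge, and is then a `G`-path, or ends with a `G'`-path to `u`,
the edge `u → v` and a `G`-path from `v`. A path from `T` to `S` yields `v →* u`; a path from
`T` to `Z` or from `Z` to `S` either yields `v →* u` or is an old path, which would put the
vertex of `Z` into `T` or `S`.
-/

namespace Relation

variable {V : Type*} {E E' : V → V → Prop} {u v : V}

theorem not_reflTransGen_of_rel_of_acyclic (huv : E' u v)
    (hacyc : ∀ w, ¬ TransGen E' w w) : ¬ ReflTransGen E' v u :=
  fun hvu => hacyc u (TransGen.head' huv hvu)

section InsertEdge

variable (hE' : ∀ x y, E' x y ↔ (E x y ∨ (x = u ∧ y = v)))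
include hE'

theorem reflTransGen_of_reflTransGen_of_insertEdge {x y : V} (h : ReflTransGen E x y) :
    ReflTransGen E' x y :=
  ReflTransGen.mono (fun a b hab => (hE' a b).mpr (Or.inl hab)) _ _ h

/-- Split a path of `E'` at its last use of the new edge `u → v`. -/
theorem reflTransGen_insertEdge_cases {x y : V} (h : ReflTransGen E' x y) :
    ReflTransGen E x y ∨ (ReflTransGen E' x u ∧ ReflTransGen E v y) := by
  induction h with
  | refl => exact Or.inl .refl
  | tail _ hbc ih =>
    rcases (hE' _ _).mp hbc with hbc | ⟨rfl, rfl⟩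
    · exact ih.imp (·.tail hbc) (And.imp_right (·.tail hbc))
    · exact Or.inr ⟨ih.elim (reflTransGen_of_reflTransGen_of_insertEdge hE') And.left, .refl⟩

end InsertEdge

end Relation

theorem insertion_S_Z_T_non_reachability_general
    {V : Type*} (E : V → V → Prop)
    (u v : V)
    (E' : V → V → Prop) (hE' : ∀ x y, E' x y ↔ (E x y ∨ (x = u ∧ y = v)))
    (hacyc : ∀ w : V, ¬ Relation.TransGen E' w w)
    (W S T Z : Set V)
    (hT : T = {w ∈ W | Relation.ReflTransGen E v w})
    (hS : S = {w ∈ W | Relation.ReflTransGen E w u})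
    (hZ : Z = W \ (S ∪ T)) :
    (∀ t ∈ T, ∀ a ∈ S, ¬ Relation.ReflTransGen E' t a) ∧
    (∀ t ∈ T, ∀ z ∈ Z, ¬ Relation.ReflTransGen E' t z) ∧
    (∀ z ∈ Z, ∀ a ∈ S, ¬ Relation.ReflTransGen E' z a) := by
  have hvu : ¬ Relation.ReflTransGen E' v u :=
    Relation.not_reflTransGen_of_rel_of_acyclic ((hE' u v).mpr (Or.inr ⟨rfl, rfl⟩)) hacyc
  have lift {x y : V} (h : Relation.ReflTransGen E x y) : Relation.ReflTransGen E' x y :=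
    Relation.reflTransGen_of_reflTransGen_of_insertEdge hE' h
  subst hT hS hZ
  refine ⟨?_, ?_, ?_⟩
  · rintro t ⟨-, hvt⟩ a ⟨-, hau⟩ hta
    exact hvu (((lift hvt).trans hta).trans (lift hau))
  · rintro t ⟨-, hvt⟩ z ⟨hzW, hz⟩ htz
    rcases Relation.reflTransGen_insertEdge_cases hE' ((lift hvt).trans htz)
      with hvz | ⟨hvu', -⟩
    · exact hz (Or.inr ⟨hzW, hvz⟩)
    · exact hvu hvu'
  · rintro z ⟨hzW, hz⟩ a ⟨-, hau⟩ hza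
    rcases Relation.reflTransGen_insertEdge_cases hE' hza with hza | ⟨-, hva⟩
    · exact hz (Or.inl ⟨hzW, hza.trans hau⟩)
    · exact hvu (lift (hva.trans hau))

/-- After inserting an edge `(u,v)` with `π u > π v` into a DAG with
topological order `π` (keeping the graph acyclic), with `W` the vertices whose labels
lie between `π v` and `π u`, `T ⊆ W` the vertices reachable from `v` (in the old graph),
`S ⊆ W` the vertices that reach `u` (in the old graph), and `Z = W \ (S ∪ T)`:
no vertex of `T` reaches a vertex of `S`, no vertex of `T` reaches a vertex of `Z`,
and no vertex of `Z` reaches a vertex of `S`, in the new graph. -/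
theorem insertion_S_Z_T_non_reachability
    {V : Type*} (E : V → V → Prop) (π : V → ℕ)
    (hinj : Function.Injective π)
    (htopo : ∀ x y, E x y → π x < π y)
    (u v : V) (huv : π v < π u)
    (E' : V → V → Prop) (hE' : ∀ x y, E' x y ↔ (E x y ∨ (x = u ∧ y = v)))
    (hacyc : ∀ w : V, ¬ Relation.TransGen E' w w)
    (W S T Z : Set V)
    (hW : W = {w | π v ≤ π w ∧ π w ≤ π u})
    (hT : T = {w ∈ W | Relation.ReflTransGen E v w})
    (hS : S = {w ∈ W | Relation.ReflTransGen E w u})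
    (hZ : Z = W \ (S ∪ T)) :
    (∀ t ∈ T, ∀ a ∈ S, ¬ Relation.ReflTransGen E' t a) ∧
    (∀ t ∈ T, ∀ z ∈ Z, ¬ Relation.ReflTransGen E' t z) ∧
    (∀ z ∈ Z, ∀ a ∈ S, ¬ Relation.ReflTransGen E' z a) :=
  insertion_S_Z_T_non_reachability_general E u v E' hE' hacyc W S T Z hT hS hZ
end

section
/- Let G be a directed acyclic graph with topological order π, and suppose inserting edge (u,v) with π(u) > π(v) keeps the graph acyclic. Define W, S, T, Z as follows: W = {w : π(v) ≤ π(w) ≤ π(u)}, T the vertices of W reachable from v in G, S the vertices of W that reach u in G, Z = W \ (S ∪ T). Then the ordering obtained by replacing the segment of π on W by the sequence S, Z, T (each internally ordered by the old π, with all vertices outside W unchanged) is a topological order of G + (u,v). -/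
/-!
Vertices outside the segment `W = π⁻¹[π v, π u]` keep their labels and `π'` keeps `W` inside
that segment, so an edge with an endpoint outside `W` stays increasing. Inside `W` an edge never
goes back through the blocks `S, Z, T`: an edge into `S` starts in `S` and an edge out of `T`
ends in `T`. Within a block `π'` follows `π`, and the new edge `(u, v)` runs from `S` to `T`.
-/

open Set Function

section IccRelabeling

variable {V : Type*} {π π' : V → ℕ} {a b : ℕ}

structure IsIccRelabeling (π π' : V → ℕ) (a b : ℕ) : Prop where
  eq_of_notMem : ∀ w, π w ∉ Icc a b → π' w = π w
  mem_Icc : ∀ w, π w ∈ Icc a b → π' w ∈ Icc a b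

theorem IsIccRelabeling.mem_Icc_iff (h : IsIccRelabeling π π' a b) (w : V) :
    π' w ∈ Icc a b ↔ π w ∈ Icc a b := by
  by_cases hw : π w ∈ Icc a b
  · exact iff_of_true (h.mem_Icc w hw) hw
  · rw [h.eq_of_notMem w hw]

theorem IsIccRelabeling.injective (h : IsIccRelabeling π π' a b) (hπ : Injective π)
    (hinj : InjOn π' (π ⁻¹' Icc a b)) : Injective π' := by
  intro x y hxy
  have hiff : π x ∈ Icc a b ↔ π y ∈ Icc a b := by rw [← h.mem_Icc_iff, ← h.mem_Icc_iff, hxy]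
  by_cases hx : π x ∈ Icc a b
  · exact hinj hx (hiff.1 hx) hxy
  · rw [h.eq_of_notMem x hx, h.eq_of_notMem y (hiff.not.1 hx)] at hxy
    exact hπ hxy

theorem IsIccRelabeling.lt_of_lt (h : IsIccRelabeling π π' a b) {x y : V} (hxy : π x < π y)
    (hin : π x ∈ Icc a b → π y ∈ Icc a b → π' x < π' y) : π' x < π' y := by
  by_cases hx : π x ∈ Icc a b <;> by_cases hy : π y ∈ Icc a b
  · exact hin hx hy
  · have hby : b < π y := lt_of_not_ge fun hyb => hy ⟨hx.1.trans hxy.le, hyb⟩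
    rw [h.eq_of_notMem y hy]
    exact (h.mem_Icc x hx).2.trans_lt hby
  · have hxa : π x < a := lt_of_not_ge fun hax => hx ⟨hax, hxy.le.trans hy.2⟩
    rw [h.eq_of_notMem x hx]
    exact hxa.trans_le (h.mem_Icc y hy).1
  · rwa [h.eq_of_notMem x hx, h.eq_of_notMem y hy]

end IccRelabeling

section BlockwiseOrder

variable {V : Type*} {π π' : V → ℕ} {A B C : Set V}

structure IsBlockwiseOrder (π π' : V → ℕ) (A B C : Set V) : Prop where
  lt_left : ∀ x ∈ A, ∀ y ∈ A, π x < π y → π' x < π' y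
  lt_mid : ∀ x ∈ B, ∀ y ∈ B, π x < π y → π' x < π' y
  lt_right : ∀ x ∈ C, ∀ y ∈ C, π x < π y → π' x < π' y
  left_lt_mid : ∀ x ∈ A, ∀ y ∈ B, π' x < π' y
  mid_lt_right : ∀ x ∈ B, ∀ y ∈ C, π' x < π' y
  left_lt_right : ∀ x ∈ A, ∀ y ∈ C, π' x < π' y

theorem IsBlockwiseOrder.lt_or_gt (h : IsBlockwiseOrder π π' A B C) {x y : V}
    (hx : x ∈ A ∪ B ∪ C) (hy : y ∈ A ∪ B ∪ C) (hxy : π x ≠ π y) :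
    π' x < π' y ∨ π' y < π' x := by
  have within : ∀ {X : Set V}, (∀ x ∈ X, ∀ y ∈ X, π x < π y → π' x < π' y) →
      x ∈ X → y ∈ X → π' x < π' y ∨ π' y < π' x :=
    fun hX hx hy => hxy.lt_or_gt.imp (hX x hx y hy) (hX y hy x hx)
  rcases hx with (hxA | hxB) | hxC <;> rcases hy with (hyA | hyB) | hyC
  · exact within h.lt_left hxA hyA
  · exact .inl (h.left_lt_mid x hxA y hyB)
  · exact .inl (h.left_lt_right x hxA y hyC)
  · exact .inr (h.left_lt_mid y hyA x hxB)
  · exact within h.lt_mid hxB hyB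
  · exact .inl (h.mid_lt_right x hxB y hyC)
  · exact .inr (h.left_lt_right y hyA x hxC)
  · exact .inr (h.mid_lt_right y hyB x hxC)
  · exact within h.lt_right hxC hyC

theorem IsBlockwiseOrder.injOn (h : IsBlockwiseOrder π π' A B C) (hπ : Injective π) :
    InjOn π' (A ∪ B ∪ C) := fun _ hx _ hy hxy =>
  hπ <| by_contra fun hne => (h.lt_or_gt hx hy hne).elim hxy.not_lt hxy.not_gt

theorem IsBlockwiseOrder.lt_of_lt (h : IsBlockwiseOrder π π' A B C) {x y : V}
    (hx : x ∈ A ∪ B ∪ C) (hy : y ∈ A ∪ B ∪ C) (hxy : π x < π y)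
    (hA : y ∈ A → x ∈ A) (hC : x ∈ C → y ∈ C) : π' x < π' y := by
  rcases hx with (hxA | hxB) | hxC
  · rcases hy with (hyA | hyB) | hyC
    · exact h.lt_left x hxA y hyA hxy
    · exact h.left_lt_mid x hxA y hyB
    · exact h.left_lt_right x hxA y hyC
  · rcases hy with (hyA | hyB) | hyC
    · exact h.lt_left x (hA hyA) y hyA hxy
    · exact h.lt_mid x hxB y hyB hxy
    · exact h.mid_lt_right x hxB y hyC
  · exact h.lt_right x hxC y (hC hxC) hxy

end BlockwiseOrder

theorem reordered_labels_are_topological_general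
    {V : Type*} (E : V → V → Prop) (π : V → ℕ)
    (hinj : Function.Injective π)
    (htopo : ∀ x y, E x y → π x < π y)
    (u v : V) (huv : π v < π u)
    (E' : V → V → Prop) (hE' : ∀ x y, E' x y ↔ (E x y ∨ (x = u ∧ y = v)))
    (W S T Z : Set V)
    (hW : W = {w | π v ≤ π w ∧ π w ≤ π u})
    (hT : T = {w ∈ W | Relation.ReflTransGen E v w})
    (hS : S = {w ∈ W | Relation.ReflTransGen E w u})
    (hZ : Z = W \ (S ∪ T))
    (π' : V → ℕ)
    (hout : ∀ w ∉ W, π' w = π w)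
    (hseg : ∀ w ∈ W, π v ≤ π' w ∧ π' w ≤ π u)
    (hordS : ∀ a ∈ S, ∀ b ∈ S, π a < π b → π' a < π' b)
    (hordZ : ∀ a ∈ Z, ∀ b ∈ Z, π a < π b → π' a < π' b)
    (hordT : ∀ a ∈ T, ∀ b ∈ T, π a < π b → π' a < π' b)
    (hSZ : ∀ a ∈ S, ∀ b ∈ Z, π' a < π' b)
    (hZT : ∀ a ∈ Z, ∀ b ∈ T, π' a < π' b)
    (hST : ∀ a ∈ S, ∀ b ∈ T, π' a < π' b) :
    Function.Injective π' ∧ ∀ x y, E' x y → π' x < π' y := by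
  subst hW
  have hrel : IsIccRelabeling π π' (π v) (π u) := ⟨hout, hseg⟩
  have hblocks : IsBlockwiseOrder π π' S Z T := ⟨hordS, hordZ, hordT, hSZ, hZT, hST⟩
  have hcover : {w | π v ≤ π w ∧ π w ≤ π u} ⊆ S ∪ Z ∪ T := fun w hw => by
    by_cases hs : w ∈ S
    · exact .inl (.inl hs)
    by_cases ht : w ∈ T
    · exact .inr ht
    · exact .inl (.inr (hZ ▸ ⟨hw, fun hst => hst.elim hs ht⟩))
  have hE : ∀ x y, E x y → π' x < π' y := fun x y hxy =>
    hrel.lt_of_lt (htopo x y hxy) fun hx hy =>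
      hblocks.lt_of_lt (hcover hx) (hcover hy) (htopo x y hxy)
        (fun hyS => hS ▸ ⟨hx, (hS ▸ hyS).2.head hxy⟩)
        (fun hxT => hT ▸ ⟨hy, (hT ▸ hxT).2.tail hxy⟩)
  refine ⟨hrel.injective hinj ((hblocks.injOn hinj).mono hcover), fun x y hxy => ?_⟩
  rcases (hE' x y).1 hxy with hxy | ⟨rfl, rfl⟩
  · exact hE x y hxy
  · have hu : x ∈ S := hS ▸ ⟨⟨huv.le, le_rfl⟩, .refl⟩
    have hv : y ∈ T := hT ▸ ⟨⟨le_rfl, huv.le⟩, .refl⟩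
    exact hST x hu y hv

/-- In the setting of inserting an edge `(u,v)` with `π u > π v` into a DAG
with topological order `π` (keeping acyclicity), any relabeling `π'` that keeps vertices
outside `W` unchanged, maps `W` into the old label segment `[π v, π u]`, preserves the
old relative order inside each of `S`, `Z`, `T`, and places all of `S` before all of `Z`
before all of `T`, is a topological order (injective and increasing along edges) of the
new graph `G + (u,v)`. -/
theorem reordered_labels_are_topological
    {V : Type*} (E : V → V → Prop) (π : V → ℕ)
    (hinj : Function.Injective π)
    (htopo : ∀ x y, E x y → π x < π y)
    (u v : V) (huv : π v < π u)
    (E' : V → V → Prop) (hE' : ∀ x y, E' x y ↔ (E x y ∨ (x = u ∧ y = v)))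
    (hacyc : ∀ w : V, ¬ Relation.TransGen E' w w)
    (W S T Z : Set V)
    (hW : W = {w | π v ≤ π w ∧ π w ≤ π u})
    (hT : T = {w ∈ W | Relation.ReflTransGen E v w})
    (hS : S = {w ∈ W | Relation.ReflTransGen E w u})
    (hZ : Z = W \ (S ∪ T))
    (π' : V → ℕ)
    (hout : ∀ w ∉ W, π' w = π w)
    (hseg : ∀ w ∈ W, π v ≤ π' w ∧ π' w ≤ π u)
    (hordS : ∀ a ∈ S, ∀ b ∈ S, π a < π b → π' a < π' b)
    (hordZ : ∀ a ∈ Z, ∀ b ∈ Z, π a < π b → π' a < π' b)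
    (hordT : ∀ a ∈ T, ∀ b ∈ T, π a < π b → π' a < π' b)
    (hSZ : ∀ a ∈ S, ∀ b ∈ Z, π' a < π' b)
    (hZT : ∀ a ∈ Z, ∀ b ∈ T, π' a < π' b)
    (hST : ∀ a ∈ S, ∀ b ∈ T, π' a < π' b) :
    Function.Injective π' ∧ ∀ x y, E' x y → π' x < π' y :=
  reordered_labels_are_topological_general E π hinj htopo u v huv E' hE' W S T Z hW hT hS hZ π' hout
    hseg hordS hordZ hordT hSZ hZT hST
end

section
/- Let G be a directed graph, E⁺ a set of edges on V(G), and let H be a graph on V(G) containing: (1) for each strongly connected component C of G, a directed cycle on the vertices of C; (2) for each edge (u,v) ∈ E⁺ and each vertex w, the edge (v,w) if v can reach w in G ∪ E⁺, and the edge (w,v) if w can reach v in G ∪ E⁺. Then for all vertices u, v: u and v are strongly connected in G ∪ E⁺ if and only if they are strongly connected in H. -/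
/-!
A path in `G ∪ E⁺` either stays in `G`, or it uses an edge of `E⁺` and so passes through the
head `t` of that edge. In the first case the two vertices lie in one SCC of `G`, which the cycles
of type (1) strongly connect. In the second case both vertices are strongly connected to `t` in
`G ∪ E⁺`, and the edges of type (2) join each of them to `t` in both directions.
Conversely, every edge of `H` is a reachability in `G ∪ E⁺`.
-/

/-- Two vertices are strongly connected: each reaches the other. -/
def SConn {V : Type*} (E : V → V → Prop) (u v : V) : Prop :=
  Relation.ReflTransGen E u v ∧ Relation.ReflTransGen E v u

open Relation

section

variable {V : Type*} {r s : V → V → Prop} {u v w : V}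

theorem Relation.ReflTransGen.left_or_exists_right_of_sup (h : ReflTransGen (r ⊔ s) u v) :
    ReflTransGen r u v ∨
      ∃ x t, ReflTransGen (r ⊔ s) u x ∧ s x t ∧ ReflTransGen (r ⊔ s) t v := by
  induction h using ReflTransGen.head_induction_on with
  | refl => exact .inl .refl
  | @head a b hab hbv ih =>
    rcases hab with hr | hs
    · rcases ih with hbv' | ⟨x, t, hbx, hxt, htv⟩
      · exact .inl (.head hr hbv')
      · exact .inr ⟨x, t, .head (.inl hr) hbx, hxt, htv⟩
    · exact .inr ⟨a, b, .refl, hs, hbv⟩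

namespace SConn

theorem symm (h : SConn r u v) : SConn r v u := ⟨h.2, h.1⟩

theorem trans (huv : SConn r u v) (hvw : SConn r v w) : SConn r u w :=
  ⟨huv.1.trans hvw.1, hvw.2.trans huv.2⟩

theorem of_le_reflTransGen (hrs : r ≤ ReflTransGen s) (h : SConn r u v) : SConn s u v :=
  ⟨reflTransGen_closed hrs _ _ h.1, reflTransGen_closed hrs _ _ h.2⟩

theorem left_or_exists_right_of_sup (h : SConn (r ⊔ s) u v) :
    SConn r u v ∨ ∃ x t, s x t ∧ SConn (r ⊔ s) u t ∧ SConn (r ⊔ s) t v := by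
  have through_head : ∀ {a b x t}, ReflTransGen (r ⊔ s) a x → s x t →
      ReflTransGen (r ⊔ s) t b → ReflTransGen (r ⊔ s) b a →
      SConn (r ⊔ s) a t ∧ SConn (r ⊔ s) t b := fun hax hxt htb hba =>
    have hat := hax.tail (.inr hxt)
    ⟨⟨hat, htb.trans hba⟩, ⟨htb, hba.trans hat⟩⟩
  rcases h.1.left_or_exists_right_of_sup with huv | ⟨x, t, hux, hxt, htv⟩
  · rcases h.2.left_or_exists_right_of_sup with hvu | ⟨x, t, hvx, hxt, htu⟩
    · exact .inl ⟨huv, hvu⟩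
    · obtain ⟨hvt, htu⟩ := through_head hvx hxt htu h.1
      exact .inr ⟨x, t, hxt, htu.symm, hvt.symm⟩
  · exact .inr ⟨x, t, hxt, through_head hux hxt htv h.2⟩

end SConn

end

theorem scc_certificate_graph_general
    {V : Type*} (E Eplus Hc : V → V → Prop)
    (E' : V → V → Prop) (hE' : ∀ x y, E' x y ↔ (E x y ∨ Eplus x y))
    (hcyc_sub : ∀ x y, Hc x y → SConn E x y)
    (hcyc_conn : ∀ x y, SConn E x y → Relation.ReflTransGen Hc x y)
    (H : V → V → Prop)
    (hH : ∀ x y, H x y ↔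
      (Hc x y ∨ (Relation.ReflTransGen E' x y ∧ ((∃ a, Eplus a x) ∨ (∃ a, Eplus a y))))) :
    ∀ u v : V, SConn E' u v ↔ SConn H u v := by
  obtain rfl : E' = E ⊔ Eplus := funext₂ fun x y => propext (hE' x y)
  have hH_le : H ≤ ReflTransGen (E ⊔ Eplus) := fun x y hxy => by
    rcases (hH x y).1 hxy with hc | ⟨hxy', -⟩
    · exact ReflTransGen.mono le_sup_left _ _ (hcyc_sub x y hc).1
    · exact hxy'
  have sConn_H_of_head : ∀ {x t a}, Eplus x t → SConn (E ⊔ Eplus) a t → SConn H a t :=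
    fun hxt hat => ⟨.single ((hH _ _).2 (.inr ⟨hat.1, .inr ⟨_, hxt⟩⟩)),
      .single ((hH _ _).2 (.inr ⟨hat.2, .inl ⟨_, hxt⟩⟩))⟩
  intro u v
  refine ⟨fun huv => ?_, SConn.of_le_reflTransGen hH_le⟩
  rcases huv.left_or_exists_right_of_sup with hE | ⟨x, t, hxt, hut, htv⟩
  · exact SConn.of_le_reflTransGen (fun a b hab => .single ((hH a b).2 (.inl hab)))
      ⟨hcyc_conn u v hE, hcyc_conn v u hE.symm⟩
  · exact (sConn_H_of_head hxt hut).trans (sConn_H_of_head hxt htv.symm).symm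

/-- Let `G` have edges `E`, let `E⁺` (`Eplus`) be extra edges, and
`E'` the edge relation of `G ∪ E⁺`. Let `H` consist of (1) for each SCC of `G` a directed
cycle on its vertices (encoded by a relation `Hc` whose edges stay inside SCCs of `G`
and which strongly connects every SCC of `G`), and (2) for each head `v` of an `E⁺` edge
and each `w`, the edge `(v,w)` if `v` reaches `w` in `G ∪ E⁺` and the edge `(w,v)` if `w`
reaches `v` in `G ∪ E⁺`. Then `u,v` are strongly connected in `G ∪ E⁺` iff they are
strongly connected in `H`. -/
theorem scc_certificate_graph
    {V : Type*} [Fintype V] (E Eplus Hc : V → V → Prop)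
    (E' : V → V → Prop) (hE' : ∀ x y, E' x y ↔ (E x y ∨ Eplus x y))
    (hcyc_sub : ∀ x y, Hc x y → SConn E x y)
    (hcyc_conn : ∀ x y, SConn E x y → Relation.ReflTransGen Hc x y)
    (H : V → V → Prop)
    (hH : ∀ x y, H x y ↔
      (Hc x y ∨ (Relation.ReflTransGen E' x y ∧ ((∃ a, Eplus a x) ∨ (∃ a, Eplus a y))))) :
    ∀ u v : V, SConn E' u v ↔ SConn H u v :=
  scc_certificate_graph_general E Eplus Hc E' hE' hcyc_sub hcyc_conn H hH
end

section
/- Let G⁻ be a digraph on vertex set V, let E⁺ = {(u₁,v₁),...,(u_k,v_k)} be extra edges, let s ∈ V with v₀ := s, and let V_s be the set of vertices reachable from s in G⁻ ∪ E⁺. Suppose V_{s,0},...,V_{s,k} are constructed by the following procedure: V_{s,0} is the set of vertices reachable from s in G⁻; then, repeatedly, while some (u_i, v_i) ∈ E⁺ has u_i already covered and v_i not yet covered, set V_{s,i} to the vertices reachable from v_i in G⁻ that are not yet covered. Then the sets V_{s,0},...,V_{s,k} are pairwise disjoint, their union equals V_s, and for every i and every z ∈ V_{s,i}, every v_i → z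 path in G⁻ is fully contained in the induced subgraph G⁻[V_{s,i}]. -/
/-!
The covered set only ever grows by `covered ∪ (reach (ev i) \ covered) = covered ∪ reach (ev i)`,
so by induction it stays closed under `G⁻`-edges. Each new part `A i` is carved out of the
complement of what is already covered, which gives disjointness; and since a `G⁻`-walk ending
outside a `G⁻`-closed set never enters it, a walk from `ev i` to a vertex of `A i` stays in `A i`.
When the procedure stops, the covered set contains `s` and is closed under `G⁻` and under the
extra edges, hence contains everything reachable in `G⁻ ∪ E⁺`; conversely every part is reached
from `s` through the extra edge that created it.
-/

/-- `p` is a walk in `E` from `a` to `b` (as its full list of vertices). -/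
def IsWalkList {V : Type*} (E : V → V → Prop) (p : List V) (a b : V) : Prop :=
  p.head? = some a ∧ p.getLast? = some b ∧ List.Chain' E p

open Function Relation

section

variable {V ι : Type*}

def ForwardClosed (E : V → V → Prop) (C : Set V) : Prop :=
  ∀ ⦃x y⦄, E x y → x ∈ C → y ∈ C

namespace ForwardClosed

variable {E : V → V → Prop} {C D : Set V}

theorem union (hC : ForwardClosed E C) (hD : ForwardClosed E D) : ForwardClosed E (C ∪ D) :=
  fun _ _ hxy hx => hx.imp (hC hxy) (hD hxy)

theorem mono {E' : V → V → Prop} (hC : ForwardClosed E' C) (hle : E ≤ E') : ForwardClosed E C :=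
  fun _ _ hxy => hC (hle _ _ hxy)

theorem setOf_reflTransGen_subset (hC : ForwardClosed E C) {a : V} (ha : a ∈ C) :
    {z | ReflTransGen E a z} ⊆ C := fun _ hz => by
  induction hz with
  | refl => exact ha
  | tail _ hyz ih => exact hC hyz ih

end ForwardClosed

theorem forwardClosed_setOf_reflTransGen (E : V → V → Prop) (a : V) :
    ForwardClosed E {z | ReflTransGen E a z} :=
  fun _ _ hxy hx => ReflTransGen.tail hx hxy

namespace IsWalkList

variable {E : V → V → Prop} {p : List V} {a b : V}

theorem reflTransGen_of_mem (hp : IsWalkList E p a b) : ∀ w ∈ p, ReflTransGen E a w :=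
  hp.2.2.induction _ _ (fun _ _ hxy hx => hx.tail hxy) fun hne => by
    obtain ⟨q, rfl⟩ := List.head?_eq_some_iff.1 hp.1
    exact .refl

theorem notMem_of_mem {C : Set V} (hC : ForwardClosed E C) (hp : IsWalkList E p a b)
    (hb : b ∉ C) : ∀ w ∈ p, w ∉ C :=
  hp.2.2.backwards_induction _ _ (fun _ _ hxy hy hx => hy (hC hxy hx)) fun hne => by
    obtain ⟨q, rfl⟩ := List.getLast?_eq_some_iff.1 hp.2.1
    simpa using hb

end IsWalkList

def coveredBy (A0 : Set V) (A : ι → Set V) (l : List ι) : Set V :=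
  A0 ∪ {z | ∃ i ∈ l, z ∈ A i}

section CoveredBy

variable {A0 : Set V} {A : ι → Set V} {L : List ι}

theorem coveredBy_nil : coveredBy A0 A [] = A0 := by
  simp [coveredBy]

theorem subset_coveredBy_left (l : List ι) : A0 ⊆ coveredBy A0 A l := Set.subset_union_left

theorem subset_coveredBy {l : List ι} {i : ι} (hi : i ∈ l) : A i ⊆ coveredBy A0 A l :=
  fun _ hz => Or.inr ⟨i, hi, hz⟩

theorem coveredBy_append_singleton (l : List ι) (i : ι) :
    coveredBy A0 A (l ++ [i]) = coveredBy A0 A l ∪ A i := by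
  ext z
  simp only [coveredBy, Set.mem_union, List.mem_append, List.mem_singleton]
  grind

theorem coveredBy_take_add_one {t : ℕ} {i : ι} (h : L[t]? = some i) :
    coveredBy A0 A (L.take (t + 1)) = coveredBy A0 A (L.take t) ∪ A i := by
  rw [List.take_add_one, h, Option.toList_some, coveredBy_append_singleton]

theorem coveredBy_take_add_one_of_eq_none {t : ℕ} (h : L[t]? = none) :
    coveredBy A0 A (L.take (t + 1)) = coveredBy A0 A (L.take t) := by
  rw [List.take_add_one, h, Option.toList_none, List.append_nil]

theorem union_iUnion_eq_coveredBy (hskip : ∀ i ∉ L, A i = ∅) :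
    A0 ∪ ⋃ i, A i = coveredBy A0 A L := by
  refine Set.union_subset (subset_coveredBy_left L) (Set.iUnion_subset fun i => ?_)
    |>.antisymm (Set.union_subset_union_right _ ?_)
  · by_cases hi : i ∈ L
    · exact subset_coveredBy hi
    · simp [hskip i hi]
  · rintro z ⟨i, -, hz⟩
    exact Set.mem_iUnion_of_mem i hz

theorem mem_take_of_getElem? {t t' : ℕ} {j : ι} (hj : L[t']? = some j) (ht : t' < t) :
    j ∈ L.take t :=
  List.mem_iff_getElem?.2 ⟨t', by rwa [List.getElem?_take, if_pos ht]⟩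

end CoveredBy

def IsReachCarving (E : V → V → Prop) (ev : ι → V) (A0 : Set V) (A : ι → Set V) (L : List ι) :
    Prop :=
  ∀ t i, L[t]? = some i → A i = {z | ReflTransGen E (ev i) z} \ coveredBy A0 A (L.take t)

namespace IsReachCarving

variable {E : V → V → Prop} {ev : ι → V} {A0 : Set V} {A : ι → Set V} {L : List ι}

theorem forwardClosed_coveredBy_take (h : IsReachCarving E ev A0 A L) (hA0 : ForwardClosed E A0)
    (t : ℕ) : ForwardClosed E (coveredBy A0 A (L.take t)) := by
  induction t with
  | zero => rwa [List.take_zero, coveredBy_nil]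
  | succ t ih =>
    rcases hL : L[t]? with _ | i
    · rwa [coveredBy_take_add_one_of_eq_none hL]
    · rw [coveredBy_take_add_one hL, h t i hL, Set.union_sdiff_self]
      exact ih.union (forwardClosed_setOf_reflTransGen E (ev i))

theorem coveredBy_take_subset (h : IsReachCarving E ev A0 A L) {eu : ι → V} {S : Set V}
    (hS : ForwardClosed E S) (hA0 : A0 ⊆ S) (hedge : ∀ i, eu i ∈ S → ev i ∈ S)
    (heu : ∀ t i, L[t]? = some i → eu i ∈ coveredBy A0 A (L.take t)) (t : ℕ) :
    coveredBy A0 A (L.take t) ⊆ S := by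
  induction t with
  | zero => rwa [List.take_zero, coveredBy_nil]
  | succ t ih =>
    rcases hL : L[t]? with _ | i
    · rwa [coveredBy_take_add_one_of_eq_none hL]
    · rw [coveredBy_take_add_one hL, h t i hL]
      exact Set.union_subset ih
        (Set.sdiff_subset.trans (hS.setOf_reflTransGen_subset (hedge i (ih (heu t i hL)))))

theorem disjoint_coveredBy_take (h : IsReachCarving E ev A0 A L) {t : ℕ} {i : ι}
    (hi : L[t]? = some i) : Disjoint (A i) (coveredBy A0 A (L.take t)) := by
  rw [h t i hi]
  exact Set.disjoint_sdiff_left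

theorem disjoint_left (h : IsReachCarving E ev A0 A L) (hskip : ∀ i ∉ L, A i = ∅) (i : ι) :
    Disjoint A0 (A i) := by
  by_cases hiL : i ∈ L
  · obtain ⟨t, hi⟩ := List.mem_iff_getElem?.1 hiL
    exact (h.disjoint_coveredBy_take hi).symm.mono_left (subset_coveredBy_left _)
  · simp [hskip i hiL]

theorem pairwise_disjoint (h : IsReachCarving E ev A0 A L) (hskip : ∀ i ∉ L, A i = ∅) :
    Pairwise (Disjoint on A) := by
  have key : ∀ {t t' i j}, L[t]? = some i → L[t']? = some j → t' < t → Disjoint (A i) (A j) :=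
    fun hi hj ht => (h.disjoint_coveredBy_take hi).mono_right
      (subset_coveredBy (mem_take_of_getElem? hj ht))
  intro i j hij
  by_cases hiL : i ∈ L
  · by_cases hjL : j ∈ L
    · obtain ⟨t, hi⟩ := List.mem_iff_getElem?.1 hiL
      obtain ⟨t', hj⟩ := List.mem_iff_getElem?.1 hjL
      rcases lt_trichotomy t t' with ht | rfl | ht
      · exact (key hj hi ht).symm
      · exact absurd (Option.some.inj (hi.symm.trans hj)) hij
      · exact key hi hj ht
    · simp [onFun, hskip j hjL]
  · simp [onFun, hskip i hiL]

theorem forall_mem_of_isWalkList (h : IsReachCarving E ev A0 A L) (hA0 : ForwardClosed E A0)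
    {t : ℕ} {i : ι} (hi : L[t]? = some i) {z : V} (hz : z ∈ A i) {p : List V}
    (hp : IsWalkList E p (ev i) z) : ∀ w ∈ p, w ∈ A i := by
  rw [h t i hi] at hz ⊢
  exact fun w hw => ⟨hp.reflTransGen_of_mem w hw,
    hp.notMem_of_mem (h.forwardClosed_coveredBy_take hA0 t) hz.2 w hw⟩

end IsReachCarving

end

theorem partition_procedure_general
    {V : Type*} (Em : V → V → Prop) (s : V) (k : ℕ)
    (eu ev : Fin k → V)
    (E' : V → V → Prop)
    (hE' : ∀ x y, E' x y ↔ (Em x y ∨ ∃ i : Fin k, eu i = x ∧ ev i = y))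
    (A0 : Set V) (A : Fin k → Set V)
    (L : List (Fin k))
    (covered : ℕ → Set V)
    (hcov : ∀ t, covered t = A0 ∪ {z | ∃ i ∈ L.take t, z ∈ A i})
    (hA0 : A0 = {z | Relation.ReflTransGen Em s z})
    (hstep : ∀ (t : ℕ) (i : Fin k), L[t]? = some i →
      eu i ∈ covered t ∧ ev i ∉ covered t ∧
      A i = {z | Relation.ReflTransGen Em (ev i) z} \ covered t)
    (hskip : ∀ i : Fin k, i ∉ L → A i = ∅)
    (hdone : ∀ i : Fin k, eu i ∈ covered L.length → ev i ∈ covered L.length) :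
    ((∀ i, Disjoint A0 (A i)) ∧ (∀ i j, i ≠ j → Disjoint (A i) (A j))) ∧
    ((A0 ∪ ⋃ i, A i) = {z | Relation.ReflTransGen E' s z}) ∧
    ((∀ z ∈ A0, ∀ p : List V, IsWalkList Em p s z → ∀ w ∈ p, w ∈ A0) ∧
     (∀ i : Fin k, ∀ z ∈ A i, ∀ p : List V,
        IsWalkList Em p (ev i) z → ∀ w ∈ p, w ∈ A i)) := by
  obtain rfl : covered = fun t => coveredBy A0 A (L.take t) := funext hcov
  simp only [List.take_length] at hstep hdone
  have hA : IsReachCarving Em ev A0 A L := fun t i hi => (hstep t i hi).2.2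
  have hA0closed : ForwardClosed Em A0 := hA0 ▸ forwardClosed_setOf_reflTransGen Em s
  have hclosed : ForwardClosed Em (coveredBy A0 A L) :=
    L.take_length ▸ hA.forwardClosed_coveredBy_take hA0closed L.length
  have hEm : Em ≤ E' := fun x y h => (hE' x y).2 (.inl h)
  have hreach : ForwardClosed E' {z | ReflTransGen E' s z} := forwardClosed_setOf_reflTransGen E' s
  have hcovered : coveredBy A0 A L = {z | ReflTransGen E' s z} := by
    refine subset_antisymm ?_ (ForwardClosed.setOf_reflTransGen_subset (fun x y hxy hx => ?_) ?_)
    · exact L.take_length ▸ hA.coveredBy_take_subset (hreach.mono hEm)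
        (hA0 ▸ fun z => ReflTransGen.mono hEm s z)
        (fun i hi => hreach ((hE' _ _).2 (.inr ⟨i, rfl, rfl⟩)) hi)
        (fun t i hi => (hstep t i hi).1) L.length
    · rcases (hE' x y).1 hxy with hxy | ⟨i, rfl, rfl⟩
      · exact hclosed hxy hx
      · exact hdone i hx
    · exact subset_coveredBy_left L (hA0 ▸ ReflTransGen.refl)
  refine ⟨⟨hA.disjoint_left hskip, fun _ _ hij => hA.pairwise_disjoint hskip hij⟩,
    (union_iUnion_eq_coveredBy hskip).trans hcovered, ?_, fun i z hz p hp => ?_⟩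
  · subst hA0
    exact fun z _ p hp => hp.reflTransGen_of_mem
  · obtain ⟨t, hi⟩ := List.mem_iff_getElem?.1 (by_contra fun hiL => by simp [hskip i hiL] at hz)
    exact hA.forall_mem_of_isWalkList hA0closed hi hz hp

/-- the partition procedure. `Em` is the decremental graph `G⁻`, the extra
edges are `(eu i, ev i)` for `i : Fin k`, and `E'` is `G⁻ ∪ E⁺`. `A0` is the set of
vertices reachable from `s` in `G⁻`; the procedure processes (in the order given by the
duplicate-free list `L`) edges whose tail is covered and whose head is not, assigning to
`A i` the not-yet-covered vertices reachable from `ev i` in `G⁻`, until no further edge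
applies. Then the sets `A0, A 0, ..., A (k-1)` are pairwise disjoint, their union is the
set of vertices reachable from `s` in `G⁻ ∪ E⁺`, and every `G⁻`-walk from `ev i` to a
vertex of `A i` (resp. from `s` to a vertex of `A0`) stays inside `A i` (resp. `A0`). -/
theorem partition_procedure
    {V : Type*} (Em : V → V → Prop) (s : V) (k : ℕ)
    (eu ev : Fin k → V)
    (E' : V → V → Prop)
    (hE' : ∀ x y, E' x y ↔ (Em x y ∨ ∃ i : Fin k, eu i = x ∧ ev i = y))
    (A0 : Set V) (A : Fin k → Set V)
    (L : List (Fin k)) (hnd : L.Nodup)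
    (covered : ℕ → Set V)
    (hcov : ∀ t, covered t = A0 ∪ {z | ∃ i ∈ L.take t, z ∈ A i})
    (hA0 : A0 = {z | Relation.ReflTransGen Em s z})
    (hstep : ∀ (t : ℕ) (i : Fin k), L[t]? = some i →
      eu i ∈ covered t ∧ ev i ∉ covered t ∧
      A i = {z | Relation.ReflTransGen Em (ev i) z} \ covered t)
    (hskip : ∀ i : Fin k, i ∉ L → A i = ∅)
    (hdone : ∀ i : Fin k, eu i ∈ covered L.length → ev i ∈ covered L.length) :
    ((∀ i, Disjoint A0 (A i)) ∧ (∀ i j, i ≠ j → Disjoint (A i) (A j))) ∧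
    ((A0 ∪ ⋃ i, A i) = {z | Relation.ReflTransGen E' s z}) ∧
    ((∀ z ∈ A0, ∀ p : List V, IsWalkList Em p s z → ∀ w ∈ p, w ∈ A0) ∧
     (∀ i : Fin k, ∀ z ∈ A i, ∀ p : List V,
        IsWalkList Em p (ev i) z → ∀ w ∈ p, w ∈ A i)) :=
  partition_procedure_general Em s k eu ev E' hE' A0 A L covered hcov hA0 hstep hskip hdone
end

section
/- Let G be a digraph with vertex set V ∪ V' ∪ V'' where V' and V'' are disjoint copies of V, containing: for each edge (u,v) of a base graph G⁻ on V, the edges (u,v) and (u',v''); and for each y in a fixed subset Y ⊆ V, the edge (y, y'). Then for distinct vertices u, v ∈ V, there is a path from u to v'' in this layered graph if and only if there exists a path from u to v in G⁻ whose penultimate vertex (the tail of its last edge) belongs to Y. -/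
/-- in the 3-layered graph on `V ⊕ V ⊕ V` (base copy, primed copy `V'`,
double-primed copy `V''`) with edges `(u,v)` and `(u',v'')` for every base edge `(u,v)`
of `G⁻` (`Em`), and `(y,y')` for every `y ∈ Y`, there is a path from `u` to `v''`
(for distinct `u v : V`) iff there is a `u → v` path in `G⁻` whose penultimate vertex
lies in `Y`. -/
theorem layered_graph_penultimate
    {V : Type*} (Em : V → V → Prop) (Y : Set V)
    (EL : (V ⊕ V ⊕ V) → (V ⊕ V ⊕ V) → Prop)
    (hEL : ∀ a b, EL a b ↔
      ((∃ x y, a = Sum.inl x ∧ b = Sum.inl y ∧ Em x y) ∨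
       (∃ x y, a = Sum.inr (Sum.inl x) ∧ b = Sum.inr (Sum.inr y) ∧ Em x y) ∨
       (∃ x, a = Sum.inl x ∧ b = Sum.inr (Sum.inl x) ∧ x ∈ Y))) :
    ∀ u v : V, u ≠ v →
      (Relation.ReflTransGen EL (Sum.inl u) (Sum.inr (Sum.inr v)) ↔
        ∃ y ∈ Y, Relation.ReflTransGen Em u y ∧ Em y v) := by
  intro u v _
  constructor
  · intro h
    have key : ∀ a : V ⊕ V ⊕ V, Relation.ReflTransGen EL (Sum.inl u) a →
        (∀ w, a = Sum.inl w → Relation.ReflTransGen Em u w) ∧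
        (∀ w, a = Sum.inr (Sum.inl w) → w ∈ Y ∧ Relation.ReflTransGen Em u w) ∧
        (∀ w, a = Sum.inr (Sum.inr w) → ∃ y ∈ Y, Relation.ReflTransGen Em u y ∧ Em y w) := by
      intro a h
      induction h with
      | refl =>
        refine ⟨fun w hw => ?_, fun w hw => by simp at hw, fun w hw => by simp at hw⟩
        · obtain rfl : u = w := Sum.inl.inj hw
          exact Relation.ReflTransGen.refl
      | tail _ hbc ih =>
        rw [hEL] at hbc
        rcases hbc with ⟨x, y, rfl, rfl, hxy⟩ | ⟨x, y, rfl, rfl, hxy⟩ | ⟨x, rfl, rfl, hx⟩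
        · refine ⟨fun w hw => ?_, fun w hw => by simp at hw, fun w hw => by simp at hw⟩
          obtain rfl : y = w := Sum.inl.inj hw
          exact (ih.1 x rfl).tail hxy
        · refine ⟨fun w hw => by simp at hw, fun w hw => by simp at hw, fun w hw => ?_⟩
          obtain rfl : y = w := Sum.inr.inj (Sum.inr.inj hw)
          obtain ⟨hxY, hux⟩ := ih.2.1 x rfl
          exact ⟨x, hxY, hux, hxy⟩
        · refine ⟨fun w hw => by simp at hw, fun w hw => ?_, fun w hw => by simp at hw⟩
          obtain rfl : x = w := Sum.inl.inj (Sum.inr.inj hw)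
          exact ⟨hx, ih.1 x rfl⟩
    exact (key _ h).2.2 v rfl
  · rintro ⟨y, hyY, huy, hyv⟩
    have h1 : Relation.ReflTransGen EL (Sum.inl u) (Sum.inl y) := by
      clear hyY hyv
      induction huy with
      | refl => exact Relation.ReflTransGen.refl
      | tail _ hab ih =>
        exact ih.tail ((hEL _ _).mpr (Or.inl ⟨_, _, rfl, rfl, hab⟩))
    exact (h1.tail ((hEL _ _).mpr (Or.inr (Or.inr ⟨y, rfl, rfl, hyY⟩)))).tail
      ((hEL _ _).mpr (Or.inr (Or.inl ⟨y, v, rfl, rfl, hyv⟩)))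
end

section
/- In the setting of the inductively defined paths P_{u,v} (with l_{u,v} the minimal number of initial inserted edges needed for a u → v path), let s,t be vertices with l_{s,t} ≥ 1. Then an s → t path exists in G₀ ∪ {e₁,...,e_k} if and only if there exists an index i ∈ {1,...,k} with l_{s,u_i} < i and l_{v_i,t} < i. Moreover, if i is the minimal such index, then l_{s,t} = i, i.e., P_{s,t} = P_{s,u_i} · e_i · P_{v_i,t}. -/
/-- Index `i` (representing the inserted edge number `i+1`) is *good* for the pair
`(s,t)`: `l_{s,u_{i+1}} < i+1` and `l_{v_{i+1},t} < i+1` (both being defined). -/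
def GoodIdx {V : Type*} (El : ℕ → V → V → Prop) (lfun : V → V → ℕ) {k : ℕ}
    (eu ev : Fin k → V) (s t : V) (i : Fin k) : Prop :=
  ((∃ l ≤ k, Relation.ReflTransGen (El l) s (eu i)) ∧ lfun s (eu i) < (i : ℕ) + 1) ∧
  ((∃ l ≤ k, Relation.ReflTransGen (El l) (ev i) t) ∧ lfun (ev i) t < (i : ℕ) + 1)

/-!
A path in `G₀ ∪ E⁺_{j+1}` either avoids `e_{j+1}`, or its parts before the first and after the
last use of `e_{j+1}` are `s → u_{j+1}` and `v_{j+1} → t` paths in `G₀ ∪ E⁺_j`.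
Hence, when `l_{s,t} = j + 1`, the index `j + 1` is good, and conversely every good index `i`
yields an `s → t` path in `G₀ ∪ E⁺_i`, so that `l_{s,t} ≤ i`.
-/

open Relation

theorem Relation.reflTransGen_or_edge_iff {α : Type*} {R : α → α → Prop} {u v x y : α} :
    ReflTransGen (fun a b => R a b ∨ a = u ∧ b = v) x y ↔
      ReflTransGen R x y ∨ ReflTransGen R x u ∧ ReflTransGen R v y := by
  have hR : R ≤ fun a b => R a b ∨ a = u ∧ b = v := fun _ _ => Or.inl
  constructor
  · intro h
    induction h with
    | refl => exact Or.inl .refl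
    | tail _ hcd ih =>
      rcases hcd with hcd | ⟨rfl, rfl⟩
      · exact ih.imp (·.tail hcd) (And.imp_right (·.tail hcd))
      · exact Or.inr ⟨ih.elim id (·.1), .refl⟩
  · rintro (h | ⟨hxu, hvy⟩)
    · exact ReflTransGen.mono hR _ _ h
    · exact ((ReflTransGen.mono hR _ _ hxu).tail (Or.inr ⟨rfl, rfl⟩)).trans
        (ReflTransGen.mono hR _ _ hvy)

/-- The graph `G₀ ∪ E⁺_l`; the inserted edge `e_{i+1}` is `(eu i, ev i)`. -/
def insertedRel {V : Type*} (E0 : V → V → Prop) {k : ℕ} (eu ev : Fin k → V) (l : ℕ) :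
    V → V → Prop :=
  fun x y => E0 x y ∨ ∃ i : Fin k, (i : ℕ) < l ∧ eu i = x ∧ ev i = y

def IsFirstReachLevel {V : Type*} (El : ℕ → V → V → Prop) (k : ℕ) (lfun : V → V → ℕ) : Prop :=
  ∀ u v, (∃ l ≤ k, ReflTransGen (El l) u v) →
    (lfun u v ≤ k ∧ ReflTransGen (El (lfun u v)) u v ∧
      ∀ l', ReflTransGen (El l') u v → lfun u v ≤ l')

section

variable {V : Type*} {E0 : V → V → Prop} {k : ℕ} {eu ev : Fin k → V}

theorem insertedRel_mono : Monotone (insertedRel E0 eu ev) := by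
  intro l l' hl x y
  exact Or.imp_right fun ⟨i, hi, hx, hy⟩ => ⟨i, hi.trans_le hl, hx, hy⟩

theorem insertedRel_succ (j : Fin k) :
    insertedRel E0 eu ev (j + 1) = fun x y => insertedRel E0 eu ev j x y ∨ x = eu j ∧ y = ev j := by
  ext x y
  simp only [insertedRel, Nat.lt_succ_iff_lt_or_eq, Fin.val_inj, or_and_right, exists_or,
    exists_eq_left, or_assoc]
  grind

end

section

variable {V : Type*} {El : ℕ → V → V → Prop} {k : ℕ} {lfun : V → V → ℕ}

theorem reflTransGen_iff_firstReachLevel_le (hmono : Monotone El)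
    (hlmin : IsFirstReachLevel El k lfun) {u v : V} {l : ℕ} (hl : l ≤ k) :
    ReflTransGen (El l) u v ↔ (∃ l ≤ k, ReflTransGen (El l) u v) ∧ lfun u v ≤ l := by
  constructor
  · intro h
    exact ⟨⟨l, hl, h⟩, (hlmin u v ⟨l, hl, h⟩).2.2 l h⟩
  · rintro ⟨hex, hle⟩
    exact ReflTransGen.mono (hmono hle) _ _ (hlmin u v hex).2.1

theorem goodIdx_iff (hmono : Monotone El) (hlmin : IsFirstReachLevel El k lfun)
    {eu ev : Fin k → V} {s t : V} {i : Fin k} :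
    GoodIdx El lfun eu ev s t i ↔ ReflTransGen (El i) s (eu i) ∧ ReflTransGen (El i) (ev i) t := by
  simp only [GoodIdx, Nat.lt_succ_iff,
    reflTransGen_iff_firstReachLevel_le hmono hlmin i.isLt.le]

end

section

variable {V : Type*} {E0 : V → V → Prop} {k : ℕ} {eu ev : Fin k → V} {lfun : V → V → ℕ}
  {s t : V}

theorem reflTransGen_succ_of_goodIdx (hlmin : IsFirstReachLevel (insertedRel E0 eu ev) k lfun)
    {i : Fin k} (hi : GoodIdx (insertedRel E0 eu ev) lfun eu ev s t i) :
    ReflTransGen (insertedRel E0 eu ev (i + 1)) s t := by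
  rw [insertedRel_succ, reflTransGen_or_edge_iff]
  exact Or.inr ((goodIdx_iff insertedRel_mono hlmin).mp hi)

theorem goodIdx_of_firstReachLevel_eq_succ
    (hlmin : IsFirstReachLevel (insertedRel E0 eu ev) k lfun)
    (hex : ∃ l ≤ k, ReflTransGen (insertedRel E0 eu ev l) s t) {j : Fin k}
    (hj : lfun s t = j + 1) :
    GoodIdx (insertedRel E0 eu ev) lfun eu ev s t j := by
  obtain ⟨-, hreach, hleast⟩ := hlmin s t hex
  rw [hj, insertedRel_succ, reflTransGen_or_edge_iff] at hreach
  rcases hreach with hj' | hsplit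
  · exact absurd (hleast j hj') (by omega)
  · exact (goodIdx_iff insertedRel_mono hlmin).mpr hsplit

end

theorem first_useful_insertion_general
    {V : Type*} (E0 : V → V → Prop) (k : ℕ) (eu ev : Fin k → V)
    (El : ℕ → V → V → Prop)
    (hEl : ∀ (l : ℕ) (x y : V), El l x y ↔
      (E0 x y ∨ ∃ i : Fin k, (i : ℕ) < l ∧ eu i = x ∧ ev i = y))
    (lfun : V → V → ℕ)
    (hlmin : ∀ u v, (∃ l ≤ k, Relation.ReflTransGen (El l) u v) →
      (lfun u v ≤ k ∧ Relation.ReflTransGen (El (lfun u v)) u v ∧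
       ∀ l', Relation.ReflTransGen (El l') u v → lfun u v ≤ l'))
    (P : V → V → List V)
    (hind : ∀ u v, (∃ l ≤ k, Relation.ReflTransGen (El l) u v) → 1 ≤ lfun u v →
      ∃ i : Fin k, (i : ℕ) + 1 = lfun u v ∧ P u v = P u (eu i) ++ P (ev i) v)
    (s t : V) (hst : ¬ Relation.ReflTransGen (El 0) s t) :
    (Relation.ReflTransGen (El k) s t ↔ ∃ i : Fin k, GoodIdx El lfun eu ev s t i) ∧
    (∀ i : Fin k, GoodIdx El lfun eu ev s t i →
      (∀ j : Fin k, GoodIdx El lfun eu ev s t j → (i : ℕ) ≤ (j : ℕ)) →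
      lfun s t = (i : ℕ) + 1 ∧ P s t = P s (eu i) ++ P (ev i) t) := by
  obtain rfl : El = insertedRel E0 eu ev := by
    ext l x y
    exact hEl l x y
  have reach_of_good : ∀ i, GoodIdx (insertedRel E0 eu ev) lfun eu ev s t i → ∃ l ≤ k, ReflTransGen (insertedRel E0 eu ev l) s t :=
    fun i hi => ⟨i + 1, i.isLt, reflTransGen_succ_of_goodIdx hlmin hi⟩
  have last_edge_good : (∃ l ≤ k, ReflTransGen (insertedRel E0 eu ev l) s t) →
      ∃ j : Fin k, GoodIdx (insertedRel E0 eu ev) lfun eu ev s t j ∧ lfun s t = j + 1 ∧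
        P s t = P s (eu j) ++ P (ev j) t := by
    intro hex
    have hpos : 1 ≤ lfun s t :=
      Nat.one_le_iff_ne_zero.mpr fun h0 => hst (h0 ▸ (hlmin s t hex).2.1)
    obtain ⟨j, hj, hP⟩ := hind s t hex hpos
    exact ⟨j, goodIdx_of_firstReachLevel_eq_succ hlmin hex hj.symm, hj.symm, hP⟩
  refine ⟨⟨fun h => ?_, fun ⟨i, hi⟩ => ?_⟩, fun i hi hleast => ?_⟩
  · obtain ⟨j, hj, -⟩ := last_edge_good ⟨k, le_rfl, h⟩
    exact ⟨j, hj⟩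
  · obtain ⟨l, hl, h⟩ := reach_of_good i hi
    exact ReflTransGen.mono (insertedRel_mono hl) _ _ h
  · obtain ⟨j, hj, hlj, hP⟩ := last_edge_good (reach_of_good i hi)
    have hle : lfun s t ≤ i + 1 :=
      (hlmin s t (reach_of_good i hi)).2.2 _ (reflTransGen_succ_of_goodIdx hlmin hi)
    obtain rfl : i = j := Fin.ext (by have := hleast j hj; omega)
    exact ⟨hlj, hP⟩

/-- in the setting of the inductively defined paths `P`, for vertices
`s, t` with `l_{s,t} ≥ 1` (i.e. no `s → t` path in `G₀`): an `s → t` path exists in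
`G₀ ∪ {e₁,…,e_k}` iff some index is good; moreover for the minimal good index `i`,
`l_{s,t} = i + 1`, i.e. `P s t = P s (eu i) ++ P (ev i) t`. -/
theorem first_useful_insertion
    {V : Type*} (E0 : V → V → Prop) (k : ℕ) (eu ev : Fin k → V)
    (El : ℕ → V → V → Prop)
    (hEl : ∀ (l : ℕ) (x y : V), El l x y ↔
      (E0 x y ∨ ∃ i : Fin k, (i : ℕ) < l ∧ eu i = x ∧ ev i = y))
    (lfun : V → V → ℕ)
    (hlmin : ∀ u v, (∃ l ≤ k, Relation.ReflTransGen (El l) u v) →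
      (lfun u v ≤ k ∧ Relation.ReflTransGen (El (lfun u v)) u v ∧
       ∀ l', Relation.ReflTransGen (El l') u v → lfun u v ≤ l'))
    (P : V → V → List V)
    (hbase : ∀ u v, (∃ l ≤ k, Relation.ReflTransGen (El l) u v) → lfun u v = 0 →
      IsWalkList E0 (P u v) u v ∧ (P u v).Nodup)
    (hind : ∀ u v, (∃ l ≤ k, Relation.ReflTransGen (El l) u v) → 1 ≤ lfun u v →
      ∃ i : Fin k, (i : ℕ) + 1 = lfun u v ∧ P u v = P u (eu i) ++ P (ev i) v)
    (s t : V) (hst : ¬ Relation.ReflTransGen (El 0) s t) :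
    (Relation.ReflTransGen (El k) s t ↔ ∃ i : Fin k, GoodIdx El lfun eu ev s t i) ∧
    (∀ i : Fin k, GoodIdx El lfun eu ev s t i →
      (∀ j : Fin k, GoodIdx El lfun eu ev s t j → (i : ℕ) ≤ (j : ℕ)) →
      lfun s t = (i : ℕ) + 1 ∧ P s t = P s (eu i) ++ P (ev i) t) :=
  first_useful_insertion_general E0 k eu ev El hEl lfun hlmin P hind s t hst
end

section
/- Let G₀ be a digraph and let (u₁,v₁),...,(u_k,v_k) be inserted edges, with G = G₀ ∪ {(u_i,v_i) : 1 ≤ i ≤ k}. Fix a vertex s and suppose T(w) is a reachability tree from w in G₀ (spanning all vertices reachable from w in G₀) for each w ∈ {s, v₁, ..., v_k}. Let H_s be the union of these trees together with the edges {(u_i,v_i) : 1 ≤ i ≤ k}. Then for every vertex v, there is an s → v path in G if and only if there is an s → v path in H_s. -/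
/-!
Call `s` and the heads of the inserted edges roots. A walk from `s` in `G₀ ∪ I` is cut at
its last inserted edge `(u, v)`: the part after it is a walk in `G₀` from the root `v`, and
the part before it ends at `u`, which by induction is reachable in `H` from `s`. Since the
tree of every root lies in `H` and spans what that root reaches in `G₀`, the whole walk can
be replaced by one in `H`.
-/

/-- `T` is a reachability tree from `w` in `E0`: an out-tree rooted at `w`, contained in
`E0`, whose vertex set is exactly the set of vertices reachable from `w` in `E0`. -/
def IsReachTree {V : Type*} (E0 : V → V → Prop) (w : V) (T : V → V → Prop) : Prop :=
  (∀ x y, T x y → E0 x y) ∧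
  (∀ x, ¬ T x w) ∧
  (∀ y, Relation.ReflTransGen E0 w y → y ≠ w → ∃! x, T x y) ∧
  (∀ x y, T x y → Relation.ReflTransGen E0 w x ∧ Relation.ReflTransGen E0 w y) ∧
  (∀ y, Relation.ReflTransGen E0 w y → Relation.ReflTransGen T w y)

open Relation

namespace IsReachTree

variable {V : Type*} {E₀ T : V → V → Prop} {w : V}

theorem le (hT : IsReachTree E₀ w T) : T ≤ E₀ := hT.1

theorem reflTransGen_of_reflTransGen (hT : IsReachTree E₀ w T) {v : V}
    (hv : ReflTransGen E₀ w v) : ReflTransGen T w v :=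
  hT.2.2.2.2 v hv

end IsReachTree

section SpanningRoots

variable {V : Type*} {G E₀ I H : V → V → Prop} {W : Set V} {s v : V}

theorem exists_root_of_reflTransGen (hG : G ≤ E₀ ⊔ I) (hIW : ∀ x y, I x y → y ∈ W)
    (hIH : I ≤ H) (hspan : ∀ w ∈ W, ∀ v, ReflTransGen E₀ w v → ReflTransGen H w v)
    (hs : s ∈ W) (h : ReflTransGen G s v) :
    ∃ w ∈ W, ReflTransGen H s w ∧ ReflTransGen E₀ w v := by
  induction h with
  | refl => exact ⟨s, hs, .refl, .refl⟩
  | @tail x y _ hxy ih =>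
    obtain ⟨w, hw, hsw, hwx⟩ := ih
    rcases hG x y hxy with hE | hI
    · exact ⟨w, hw, hsw, hwx.tail hE⟩
    · exact ⟨y, hIW x y hI, (hsw.trans (hspan w hw x hwx)).tail (hIH x y hI), .refl⟩

theorem reflTransGen_of_spanning_roots (hG : G ≤ E₀ ⊔ I) (hIW : ∀ x y, I x y → y ∈ W)
    (hIH : I ≤ H) (hspan : ∀ w ∈ W, ∀ v, ReflTransGen E₀ w v → ReflTransGen H w v)
    (hs : s ∈ W) (h : ReflTransGen G s v) : ReflTransGen H s v := by
  obtain ⟨w, hw, hsw, hwv⟩ := exists_root_of_reflTransGen hG hIW hIH hspan hs h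
  exact hsw.trans (hspan w hw v hwv)

end SpanningRoots

/-- with `G = G₀ ∪ {(eu i, ev i)}`, and `Hs` the union of reachability
trees (in `G₀`) from `s` and from each inserted head `ev i`, together with the inserted
edges, reachability from `s` in `G` coincides with reachability from `s` in `Hs`. -/
theorem union_of_trees_preserves_reachability
    {V : Type*} (E0 : V → V → Prop) (k : ℕ) (eu ev : Fin k → V) (s : V)
    (Tr : V → (V → V → Prop))
    (hTr : ∀ w, w ∈ insert s (Set.range ev) → IsReachTree E0 w (Tr w))
    (G Hs : V → V → Prop)
    (hG : ∀ x y, G x y ↔ (E0 x y ∨ ∃ i : Fin k, eu i = x ∧ ev i = y))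
    (hHs : ∀ x y, Hs x y ↔
      ((Tr s x y ∨ ∃ i : Fin k, Tr (ev i) x y) ∨ ∃ i : Fin k, eu i = x ∧ ev i = y)) :
    ∀ v : V, Relation.ReflTransGen G s v ↔ Relation.ReflTransGen Hs s v := by
  have hTrHs : ∀ w ∈ insert s (Set.range ev), Tr w ≤ Hs := by
    rintro w (rfl | ⟨i, rfl⟩) x y hxy
    · exact (hHs x y).2 (.inl (.inl hxy))
    · exact (hHs x y).2 (.inl (.inr ⟨i, hxy⟩))
  have hHsG : Hs ≤ G := by
    intro x y hxy
    rcases (hHs x y).1 hxy with (h | ⟨i, h⟩) | hI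
    · exact (hG x y).2 (.inl ((hTr s (Set.mem_insert _ _)).le x y h))
    · exact (hG x y).2 (.inl ((hTr (ev i) (.inr ⟨i, rfl⟩)).le x y h))
    · exact (hG x y).2 (.inr hI)
  intro v
  refine ⟨reflTransGen_of_spanning_roots (W := insert s (Set.range ev))
    (fun x y h => (hG x y).1 h) ?_ ?_ ?_ (Set.mem_insert s _), ReflTransGen.mono hHsG s v⟩
  · rintro _ _ ⟨i, -, rfl⟩
    exact .inr ⟨i, rfl⟩
  · exact fun x y h => (hHs x y).2 (.inr h)
  · exact fun w hw v hv =>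
      ReflTransGen.mono (hTrHs w hw) w v ((hTr w hw).reflTransGen_of_reflTransGen hv)
end
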